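/- The packing chromatic number of the cycle C_n equals 3 if n = 3 or n ≡ 0 (mod 4), and equals 4 if n ≥ 5 and n ≡ 1, 2, or 3 (mod 4). -/

import Mathlib

open SimpleGraph

/-- A packing `k`-coloring of a graph: colors in `{1,…,k}`, and distinct vertices
with the same color `i` are at distance greater than `i`. -/
def IsPackingColoring {V : Type*} (G : SimpleGraph V) (k : ℕ) (c : V → ℕ) : Prop :=
  (∀ v, 1 ≤ c v ∧ c v ≤ k) ∧
  ∀ u v : V, u ≠ v → c u = c v → (c u : ℕ∞) < G.edist u v

/-- The packing chromatic number. -/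
noncomputable def packingChromaticNumber {V : Type*} (G : SimpleGraph V) : ℕ :=
  sInf {k | ∃ c, IsPackingColoring G k c}

/-- The generalized corona `G ⊙ pK₁`: add `p` pendant neighbors to each vertex. -/
def genCorona {V : Type*} (G : SimpleGraph V) (p : ℕ) : SimpleGraph (V ⊕ V × Fin p) where
  Adj x y :=
    (∃ u v, x = Sum.inl u ∧ y = Sum.inl v ∧ G.Adj u v) ∨
    (∃ u j, x = Sum.inl u ∧ y = Sum.inr (u, j)) ∨
    (∃ u j, x = Sum.inr (u, j) ∧ y = Sum.inl u)
  symm := by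
    constructor
    rintro x y (⟨u, v, rfl, rfl, h⟩ | ⟨u, j, rfl, rfl⟩ | ⟨u, j, rfl, rfl⟩)
    · exact Or.inl ⟨v, u, rfl, rfl, h.symm⟩
    · exact Or.inr (Or.inr ⟨u, j, rfl, rfl⟩)
    · exact Or.inr (Or.inl ⟨u, j, rfl, rfl⟩)
  loopless := by
    constructor
    rintro x (⟨u, v, rfl, h1, h⟩ | ⟨u, j, rfl, h1⟩ | ⟨u, j, rfl, h1⟩)
    · cases h1; exact G.loopless.irrefl u h
    · exact absurd h1 (by simp)
    · exact absurd h1 (by simp)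

/-- `A` is an orientation of `G`: each edge gets exactly one direction. -/
def IsOrientation {V : Type*} (G : SimpleGraph V) (A : V → V → Prop) : Prop :=
  (∀ u v, A u v → ¬ A v u) ∧ (∀ u v, G.Adj u v ↔ (A u v ∨ A v u))

/-- Existence of a directed path of length `n` from `u` to `v`. -/
def DPath {V : Type*} (A : V → V → Prop) : ℕ → V → V → Prop
  | 0, u, v => u = v
  | (n+1), u, v => ∃ w, A u w ∧ DPath A n w v

/-- The weak directed distance: length of a shortest directed path joining `u` and `v`
in either direction. -/
noncomputable def wdist {V : Type*} (A : V → V → Prop) (u v : V) : ℕ∞ :=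
  sInf {m : ℕ∞ | ∃ n : ℕ, m = n ∧ (DPath A n u v ∨ DPath A n v u)}

/-- A packing `k`-coloring of a digraph, w.r.t. the weak directed distance. -/
def IsDPackingColoring {V : Type*} (A : V → V → Prop) (k : ℕ) (c : V → ℕ) : Prop :=
  (∀ v, 1 ≤ c v ∧ c v ≤ k) ∧
  ∀ u v : V, u ≠ v → c u = c v → (c u : ℕ∞) < wdist A u v

/-- The packing chromatic number of a digraph. -/
noncomputable def dPackingChromaticNumber {V : Type*} (A : V → V → Prop) : ℕ :=
  sInf {k | ∃ c, IsDPackingColoring A k c}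

/-- A source: no incoming arcs. -/
def IsSource {V : Type*} (A : V → V → Prop) (v : V) : Prop := ∀ u, ¬ A u v

/-- A sink: no outgoing arcs. -/
def IsSink {V : Type*} (A : V → V → Prop) (v : V) : Prop := ∀ u, ¬ A v u

/-! Lifting a packing coloring of `C_n` along `ℕ → Fin n` gives a sequence obeying the packing
condition for every gap `d < n`. With colors in `{1, 2}` no four consecutive terms can obey it
(`1, 2, 1, 2` puts two 2's at distance 2), so every window of four consecutive terms has a color
`≥ 3`. With colors in `{1, 2, 3}` every window then holds exactly one 3, so the 3's recur with
period exactly 4, and `n`-periodicity forces `4 ∣ n`. Conversely `1, 2, 1, 3` repeated colors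
`C_n` when `4 ∣ n`, recoloring the last vertex with 4 works for every `n`, and `C_3` is colored
injectively. -/

namespace IsPackingColoring

variable {V : Type*} {G : SimpleGraph V} {k : ℕ} {c : V → ℕ}

theorem mono {l : ℕ} (hc : IsPackingColoring G k c) (hkl : k ≤ l) : IsPackingColoring G l c :=
  ⟨fun v => ⟨(hc.1 v).1, (hc.1 v).2.trans hkl⟩, hc.2⟩

theorem of_injective (hc : ∀ v, 1 ≤ c v ∧ c v ≤ k) (hinj : Function.Injective c) :
    IsPackingColoring G k c :=
  ⟨hc, fun _ _ hne heq => absurd (hinj heq) hne⟩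

end IsPackingColoring

theorem packingChromaticNumber_eq_succ {V : Type*} {G : SimpleGraph V} {k : ℕ}
    (h : ∃ c, IsPackingColoring G (k + 1) c) (h' : ¬∃ c, IsPackingColoring G k c) :
    packingChromaticNumber G = k + 1 :=
  (Nat.sInf_upward_closed_eq_succ_iff (s := {k | ∃ c, IsPackingColoring G k c})
    (fun _ _ hle ⟨c, hc⟩ => ⟨c, hc.mono hle⟩) k).2 ⟨h, h'⟩

theorem Fin.val_sub_add_val_eq {n : ℕ} (a b : Fin n) :
    (a - b).val + b.val = a.val ∨ (a - b).val + b.val = a.val + n := by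
  rcases le_or_gt b a with h | h
  · exact Or.inl (by rw [Fin.coe_sub_iff_le.2 h]; omega)
  · exact Or.inr (by rw [Fin.coe_sub_iff_lt.2 h]; omega)

section PathPacking

variable {f : ℕ → ℕ}

theorem exists_three_le_of_packing (hf : ∀ t, 1 ≤ f t)
    (hpack : ∀ t d, 0 < d → d ≤ 2 → f t = f (t + d) → f t < d) (t : ℕ) :
    ∃ i < 4, 3 ≤ f (t + i) := by
  by_contra! h
  have := hpack t 1; have := hpack (t + 1) 1; have := hpack (t + 2) 1
  have := hpack t 2; have := hpack (t + 1) 2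
  have := h 0; have := h 1; have := h 2; have := h 3
  have := hf t; have := hf (t + 1); have := hf (t + 2); have := hf (t + 3)
  simp only [add_zero, add_assoc, Nat.reduceAdd] at *
  omega

theorem eq_three_add_four_of_packing (hf : ∀ t, 1 ≤ f t ∧ f t ≤ 3)
    (hpack : ∀ t d, 0 < d → d ≤ 3 → f t = f (t + d) → f t < d) {t : ℕ} (ht : f t = 3) :
    f (t + 4) = 3 := by
  obtain ⟨i, hi, hle⟩ := exists_three_le_of_packing (fun s => (hf s).1)
    (fun s d hd hd2 => hpack s d hd (by omega)) (t + 1)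
  rw [add_assoc, add_comm 1] at hle
  have h3 : f (t + (i + 1)) = 3 := le_antisymm (hf _).2 hle
  obtain rfl : i = 3 := by
    by_contra hi3
    have := hpack t (i + 1) (by omega) (by omega) (ht.trans h3.symm)
    omega
  exact h3

theorem four_dvd_of_packing (hf : ∀ t, 1 ≤ f t ∧ f t ≤ 3)
    (hpack : ∀ t d, 0 < d → d ≤ 3 → f t = f (t + d) → f t < d) {t d : ℕ} (ht : f t = 3)
    (htd : f (t + d) = 3) : 4 ∣ d := by
  induction d using Nat.strong_induction_on generalizing t with
  | _ d ih =>
    rcases Nat.lt_or_ge d 4 with hd | hd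
    · by_contra h
      have := hpack t d (by omega) (by omega) (ht.trans htd.symm)
      omega
    · have := ih (d - 4) (by omega) (eq_three_add_four_of_packing hf hpack ht)
        (by rwa [add_assoc, Nat.add_sub_cancel' hd])
      omega

end PathPacking

def cyclePattern (i : ℕ) : ℕ :=
  if i % 2 = 0 then 1 else if i % 4 = 1 then 2 else 3

namespace SimpleGraph

open Fin.NatCast

variable {n : ℕ} [NeZero n]

theorem cycleGraph_edist_add_natCast_le (hn : 2 ≤ n) (u : Fin n) (k : ℕ) :
    (cycleGraph n).edist u (u + k) ≤ k := by
  induction k with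
  | zero => simp
  | succ k ih =>
    have hadj : (cycleGraph n).Adj (u + k) (u + (k + 1 : ℕ)) := by
      rw [cycleGraph_adj']
      right
      simp [Nat.mod_eq_of_lt (by omega : 1 < n)]
    calc (cycleGraph n).edist u (u + (k + 1 : ℕ))
        ≤ (cycleGraph n).edist u (u + k) + (cycleGraph n).edist (u + k) (u + (k + 1 : ℕ)) :=
          SimpleGraph.edist_triangle
      _ ≤ k + 1 := add_le_add ih (edist_eq_one_iff_adj.2 hadj).le
      _ = (k + 1 : ℕ) := by push_cast; rfl

theorem cycleGraph_edist_le_val_sub (hn : 2 ≤ n) (u v : Fin n) :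
    (cycleGraph n).edist u v ≤ (v - u).val := by
  simpa using cycleGraph_edist_add_natCast_le hn u (v - u).val

theorem Walk.min_val_sub_le_length {u v : Fin n} (p : (cycleGraph n).Walk u v) :
    min (v - u).val (u - v).val ≤ p.length := by
  induction p with
  | nil => simp
  | @cons u x v h p ih =>
    rw [cycleGraph_adj'] at h
    have := Fin.val_sub_add_val_eq v u
    have := Fin.val_sub_add_val_eq u v
    have := Fin.val_sub_add_val_eq v x
    have := Fin.val_sub_add_val_eq x v
    have := Fin.val_sub_add_val_eq u x
    have := Fin.val_sub_add_val_eq x u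
    have := (v - u).isLt
    have := (u - v).isLt
    have := u.isLt
    have := v.isLt
    have := x.isLt
    rw [Walk.length_cons]
    omega

theorem cycleGraph_edist (u v : Fin n) :
    (cycleGraph n).edist u v = min (v - u).val (u - v).val := by
  rcases Nat.lt_or_ge n 2 with hn | hn
  · obtain rfl : u = v := Fin.ext (by omega)
    simp
  refine le_antisymm ?_ ?_
  · exact le_min (cycleGraph_edist_le_val_sub hn u v)
      (edist_comm.trans_le (cycleGraph_edist_le_val_sub hn v u))
  · obtain ⟨p, hp⟩ := (cycleGraph_preconnected u v).exists_walk_length_eq_edist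
    rw [← hp]
    exact_mod_cast p.min_val_sub_le_length

theorem isPackingColoring_cycleGraph_of_lt {k : ℕ} {c : Fin n → ℕ}
    (hc : ∀ v, 1 ≤ c v ∧ c v ≤ k)
    (hlt : ∀ u v : Fin n, u.val < v.val → c u = c v →
      c u < v.val - u.val ∧ c u < n - (v.val - u.val)) :
    IsPackingColoring (cycleGraph n) k c := by
  refine ⟨hc, fun u v hne heq => ?_⟩
  rw [cycleGraph_edist]
  have := Fin.val_sub_add_val_eq v u
  have := Fin.val_sub_add_val_eq u v
  have := (v - u).isLt
  have := (u - v).isLt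
  rcases Nat.lt_or_gt_of_ne (Fin.val_ne_of_ne hne) with h | h
  · have := hlt u v h heq
    exact_mod_cast (by omega : c u < min (v - u).val (u - v).val)
  · have := hlt v u h heq.symm
    exact_mod_cast (by omega : c u < min (v - u).val (u - v).val)

theorem IsPackingColoring.lt_of_eq_natCast_add {k : ℕ} {c : Fin n → ℕ}
    (hc : IsPackingColoring (cycleGraph n) k c) {t d : ℕ} (hd : 0 < d) (hdn : d < n)
    (heq : c t = c (t + d : ℕ)) : c t < d := by
  have hsub : ((t + d : ℕ) : Fin n) - t = d := by push_cast; abel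
  have hval : (((t + d : ℕ) : Fin n) - t).val = d := by
    rw [hsub, Fin.val_natCast, Nat.mod_eq_of_lt hdn]
  have hne : (t : Fin n) ≠ (t + d : ℕ) := fun h => by
    rw [← h, sub_self, Fin.val_zero] at hval
    omega
  have hlt := (hc.2 _ _ hne heq).trans_le (cycleGraph_edist_le_val_sub (by omega) _ _)
  rw [hval] at hlt
  exact_mod_cast hlt

theorem not_exists_isPackingColoring_cycleGraph_two (hn : 3 ≤ n) :
    ¬∃ c, IsPackingColoring (cycleGraph n) 2 c := by
  rintro ⟨c, hc⟩
  obtain ⟨i, -, hi⟩ := exists_three_le_of_packing (f := fun t : ℕ => c t) (fun t => (hc.1 _).1)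
    (fun t d hd hd2 heq => hc.lt_of_eq_natCast_add hd (by omega) heq) 0
  have := (hc.1 (0 + i : ℕ)).2
  omega

theorem not_exists_isPackingColoring_cycleGraph_three (hn : 5 ≤ n) (h4 : n % 4 ≠ 0) :
    ¬∃ c, IsPackingColoring (cycleGraph n) 3 c := by
  rintro ⟨c, hc⟩
  set f : ℕ → ℕ := fun t => c t
  have hf : ∀ t, 1 ≤ f t ∧ f t ≤ 3 := fun t => hc.1 t
  have hpack : ∀ t d, 0 < d → d ≤ 3 → f t = f (t + d) → f t < d :=
    fun t d hd hd3 => hc.lt_of_eq_natCast_add hd (by omega)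
  obtain ⟨s, -, hs⟩ := exists_three_le_of_packing (fun t => (hf t).1)
    (fun t d hd hd2 => hpack t d hd (by omega)) 0
  have hs3 : f (0 + s) = 3 := le_antisymm (hf _).2 hs
  have hperiod : f (0 + s + n) = f (0 + s) := by simp [f]
  have := four_dvd_of_packing hf hpack hs3 (hperiod.trans hs3)
  omega

theorem isPackingColoring_cycleGraph_cyclePattern (h4 : n % 4 = 0) :
    IsPackingColoring (cycleGraph n) 3 (fun i => cyclePattern i.val) := by
  refine isPackingColoring_cycleGraph_of_lt (fun v => ?_) fun u v huv heq => ?_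
  · unfold cyclePattern; split_ifs <;> omega
  · have := v.isLt
    simp only [cyclePattern] at heq ⊢
    split_ifs at heq ⊢ <;> omega

theorem isPackingColoring_cycleGraph_four :
    IsPackingColoring (cycleGraph n) 4
      (fun i => if i.val + 1 = n then 4 else cyclePattern i.val) := by
  refine isPackingColoring_cycleGraph_of_lt (fun v => ?_) fun u v huv heq => ?_
  · unfold cyclePattern; split_ifs <;> omega
  · have := v.isLt
    simp only [cyclePattern] at heq ⊢
    split_ifs at heq ⊢ <;> omega

theorem isPackingColoring_cycleGraph_three_val_succ :
    IsPackingColoring (cycleGraph 3) 3 (fun i => i.val + 1) :=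
  .of_injective (fun v => ⟨by omega, by omega⟩) fun _ _ h => Fin.ext (by simpa using h)

end SimpleGraph

theorem packing_chromatic_cycle (n : ℕ) (hn : 3 ≤ n) :
    ((n = 3 ∨ n % 4 = 0) → packingChromaticNumber (cycleGraph n) = 3) ∧
    ((5 ≤ n ∧ n % 4 ≠ 0) → packingChromaticNumber (cycleGraph n) = 4) := by
  have : NeZero n := ⟨by omega⟩
  refine ⟨fun h => ?_, fun ⟨h5, h4⟩ => ?_⟩
  · refine packingChromaticNumber_eq_succ ?_ (not_exists_isPackingColoring_cycleGraph_two hn)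
    rcases h with rfl | h4
    · exact ⟨_, isPackingColoring_cycleGraph_three_val_succ⟩
    · exact ⟨_, isPackingColoring_cycleGraph_cyclePattern h4⟩
  · exact packingChromaticNumber_eq_succ ⟨_, isPackingColoring_cycleGraph_four⟩
      (not_exists_isPackingColoring_cycleGraph_three h5 h4)
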